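/- For every n ≥ 1 there is a short exact sequence of representations of Q of the form 0 → P₂ ⊕ P₄ⁿ → P₂ ⊕ P₁ⁿ → N_n → 0 (this is the minimal projective resolution of the special tube module N_n). -/

import Mathlib

variable (k : Type) [Field k]

/-- A finite-dimensional representation of the quiver `Q` with vertices `1,2,3,4`
and arrows `a : 1 → 2`, `b : 1 → 3`, `c : 2 → 4`, `d : 3 → 4`. -/
structure QRep where
  V1 : Type
  V2 : Type
  V3 : Type
  V4 : Type
  [acg1 : AddCommGroup V1]
  [acg2 : AddCommGroup V2]
  [acg3 : AddCommGroup V3]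
  [acg4 : AddCommGroup V4]
  [mod1 : Module k V1]
  [mod2 : Module k V2]
  [mod3 : Module k V3]
  [mod4 : Module k V4]
  [fin1 : FiniteDimensional k V1]
  [fin2 : FiniteDimensional k V2]
  [fin3 : FiniteDimensional k V3]
  [fin4 : FiniteDimensional k V4]
  ma : V1 →ₗ[k] V2
  mb : V1 →ₗ[k] V3
  mc : V2 →ₗ[k] V4
  md : V3 →ₗ[k] V4

attribute [instance] QRep.acg1 QRep.acg2 QRep.acg3 QRep.acg4
  QRep.mod1 QRep.mod2 QRep.mod3 QRep.mod4
  QRep.fin1 QRep.fin2 QRep.fin3 QRep.fin4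

variable {k}

/-- Morphisms of representations of `Q`. -/
@[ext]
structure QHom (M N : QRep k) where
  f1 : M.V1 →ₗ[k] N.V1
  f2 : M.V2 →ₗ[k] N.V2
  f3 : M.V3 →ₗ[k] N.V3
  f4 : M.V4 →ₗ[k] N.V4
  comm_a : f2 ∘ₗ M.ma = N.ma ∘ₗ f1
  comm_b : f3 ∘ₗ M.mb = N.mb ∘ₗ f1
  comm_c : f4 ∘ₗ M.mc = N.mc ∘ₗ f2
  comm_d : f4 ∘ₗ M.md = N.md ∘ₗ f3

/-- Two representations are isomorphic iff there is a morphism all of whose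
components are bijective. -/
def QIso (M N : QRep k) : Prop :=
  ∃ f : QHom M N, Function.Bijective f.f1 ∧ Function.Bijective f.f2 ∧
    Function.Bijective f.f3 ∧ Function.Bijective f.f4

/-- The zero representation(s). -/
def QRep.IsZeroRep (M : QRep k) : Prop :=
  Subsingleton M.V1 ∧ Subsingleton M.V2 ∧ Subsingleton M.V3 ∧ Subsingleton M.V4

/-- Vertexwise direct sum of representations. -/
def QRep.dsum (M N : QRep k) : QRep k where
  V1 := M.V1 × N.V1
  V2 := M.V2 × N.V2
  V3 := M.V3 × N.V3
  V4 := M.V4 × N.V4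
  ma := M.ma.prodMap N.ma
  mb := M.mb.prodMap N.mb
  mc := M.mc.prodMap N.mc
  md := M.md.prodMap N.md

/-- Direct sum of `n` copies of a representation. -/
def QRep.dpow (M : QRep k) (n : ℕ) : QRep k where
  V1 := Fin n → M.V1
  V2 := Fin n → M.V2
  V3 := Fin n → M.V3
  V4 := Fin n → M.V4
  ma := M.ma.compLeft (Fin n)
  mb := M.mb.compLeft (Fin n)
  mc := M.mc.compLeft (Fin n)
  md := M.md.compLeft (Fin n)

/-- A representation is indecomposable if it is nonzero and not isomorphic to a
direct sum of two nonzero representations. -/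
def QRep.Indecomposable (M : QRep k) : Prop :=
  ¬ M.IsZeroRep ∧ ∀ A B : QRep k, QIso M (A.dsum B) → A.IsZeroRep ∨ B.IsZeroRep

/-- `0 → A → B → C → 0` is short exact (vertexwise). -/
def QShortExact {A B C : QRep k} (f : QHom A B) (g : QHom B C) : Prop :=
  (Function.Injective f.f1 ∧ Function.Injective f.f2 ∧
    Function.Injective f.f3 ∧ Function.Injective f.f4) ∧
  (Function.Surjective g.f1 ∧ Function.Surjective g.f2 ∧
    Function.Surjective g.f3 ∧ Function.Surjective g.f4) ∧
  (LinearMap.range f.f1 = LinearMap.ker g.f1 ∧ LinearMap.range f.f2 = LinearMap.ker g.f2 ∧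
    LinearMap.range f.f3 = LinearMap.ker g.f3 ∧ LinearMap.range f.f4 = LinearMap.ker g.f4)

variable (k)

/-- The `n×n` Jordan block with eigenvalue `lam`, as a linear endomorphism of `kⁿ`. -/
def jordan (n : ℕ) (lam : k) : (Fin n → k) →ₗ[k] (Fin n → k) :=
  Matrix.mulVecLin (Matrix.of fun i j : Fin n =>
    if i = j then lam else if (i : ℕ) + 1 = (j : ℕ) then 1 else 0)

/-- The representation `M_n(λ) = (kⁿ,kⁿ,kⁿ,kⁿ; id,id,id,J_n(λ))`. -/
def Mlam (n : ℕ) (lam : k) : QRep k where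
  V1 := Fin n → k
  V2 := Fin n → k
  V3 := Fin n → k
  V4 := Fin n → k
  ma := LinearMap.id
  mb := LinearMap.id
  mc := LinearMap.id
  md := jordan k n lam

/-- The indecomposable projective `P₁ = (k,k,k,k²)`. -/
def P1 : QRep k where
  V1 := k
  V2 := k
  V3 := k
  V4 := k × k
  ma := LinearMap.id
  mb := LinearMap.id
  mc := LinearMap.inl k k k
  md := LinearMap.inr k k k

/-- The indecomposable projective `P₂ = (0,k,0,k)`. -/
def P2 : QRep k where
  V1 := Fin 0 → k
  V2 := k
  V3 := Fin 0 → k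
  V4 := k
  ma := 0
  mb := 0
  mc := LinearMap.id
  md := 0

/-- The indecomposable projective `P₃ = (0,0,k,k)`. -/
def P3 : QRep k where
  V1 := Fin 0 → k
  V2 := Fin 0 → k
  V3 := k
  V4 := k
  ma := 0
  mb := 0
  mc := 0
  md := LinearMap.id

/-- The indecomposable projective `P₄ = (0,0,0,k)`. -/
def P4 : QRep k where
  V1 := Fin 0 → k
  V2 := Fin 0 → k
  V3 := Fin 0 → k
  V4 := k
  ma := 0
  mb := 0
  mc := 0
  md := 0

/-- The special-tube representation `N_n = (kⁿ,kⁿ,kⁿ,kⁿ; J_n(0),id,id,id)`. -/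
def Nrep (n : ℕ) : QRep k where
  V1 := Fin n → k
  V2 := Fin n → k
  V3 := Fin n → k
  V4 := Fin n → k
  ma := jordan k n 0
  mb := LinearMap.id
  mc := LinearMap.id
  md := LinearMap.id


/-!
Index `kⁿ` by `Fin (m + 1)`. Then `J_n(0)` is `v ↦ snoc (tail v) 0`, whose image misses exactly the
last basis vector, so the projective cover `P₂ ⊕ P₁ⁿ → N_n` sends the generator of `P₂` there: at
vertex 2 it is `(y, v) ↦ snoc (tail v) y`, at vertex 4 it is `(c, w) ↦ snoc (tail w₁) c + w₂`. Its
kernel is `k e₀` at vertex 2 and the image of `(y, u) ↦ (u last, (cons y (init u), -u))` at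
vertex 4, i.e. a copy of `P₂ ⊕ P₄ⁿ`. Exactness at each vertex reduces to the two identities
`snoc (tail (cons x (init u))) (u last) = u` and `cons (v 0) (init (snoc (tail v) x)) = v`.
-/

namespace Fin

variable {R M : Type*} [Semiring R] [AddCommMonoid M] [Module R M] {m : ℕ}

variable (R) in
def snocTailLinear : M × (Fin (m + 1) → M) →ₗ[R] Fin (m + 1) → M where
  toFun p := snoc (tail p.2) p.1
  map_add' p q := by ext i; refine lastCases ?_ (fun i => ?_) i <;> simp [tail]
  map_smul' c p := by ext i; refine lastCases ?_ (fun i => ?_) i <;> simp [tail]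

variable (R) in
def consInitLinear : M × (Fin (m + 1) → M) →ₗ[R] Fin (m + 1) → M where
  toFun p := cons p.1 (init p.2)
  map_add' p q := by ext i; refine cases ?_ (fun i => ?_) i <;> simp [init]
  map_smul' c p := by ext i; refine cases ?_ (fun i => ?_) i <;> simp [init]

lemma snocTailLinear_apply (p : M × (Fin (m + 1) → M)) :
    snocTailLinear R p = snoc (tail p.2) p.1 := rfl

lemma consInitLinear_apply (p : M × (Fin (m + 1) → M)) :
    consInitLinear R p = cons p.1 (init p.2) := rfl

lemma snocTailLinear_consInitLinear (x : M) (u : Fin (m + 1) → M) :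
    snocTailLinear R (u (last m), consInitLinear R (x, u)) = u := by
  simp [snocTailLinear_apply, consInitLinear_apply]

lemma consInitLinear_snocTailLinear (x : M) (v : Fin (m + 1) → M) :
    consInitLinear R (v 0, snocTailLinear R (x, v)) = v := by
  simp [snocTailLinear_apply, consInitLinear_apply]

lemma snocTailLinear_surjective :
    Function.Surjective (snocTailLinear R : M × (Fin (m + 1) → M) →ₗ[R] _) :=
  fun u => ⟨(u (last m), consInitLinear R (0, u)), snocTailLinear_consInitLinear 0 u⟩

end Fin

lemma LinearMap.range_zero_eq_ker_snd {R M N P : Type*} [Semiring R] [AddCommMonoid M]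
    [AddCommMonoid N] [AddCommMonoid P] [Module R M] [Module R N] [Module R P] [Subsingleton N] :
    range (0 : M →ₗ[R] N × P) = ker (snd R N P) := by
  rw [range_zero, ker_snd, eq_comm, range_eq_bot]
  exact Subsingleton.elim _ _

lemma jordan_zero_eq_snocTailLinear {k : Type} [Field k] {m : ℕ} (v : Fin (m + 1) → k) :
    jordan k (m + 1) 0 v = Fin.snocTailLinear k (0, v) := by
  ext i
  refine Fin.lastCases ?_ (fun i => ?_) i <;>
    simp only [jordan, Matrix.mulVecLin_apply, Matrix.mulVec, dotProduct, Matrix.of_apply,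
      Fin.snocTailLinear_apply, Fin.snoc_last, Fin.snoc_castSucc, Fin.tail, Fin.ext_iff,
      Fin.val_last, Fin.val_castSucc]
  · refine Finset.sum_eq_zero fun j _ => ?_
    have := j.isLt
    split_ifs <;> first | exact zero_mul _ | omega
  · rw [Finset.sum_eq_single i.succ (fun j _ hj => ?_) (by simp)]
    · simp
    · have := Fin.val_ne_of_ne hj
      split_ifs <;> simp_all

-- Lets instance search see through the vertex spaces of these concrete representations.
attribute [reducible] QRep.dsum QRep.dpow P1 P2 P4 Nrep

namespace Nrep

variable {k} (m : ℕ)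

def syzygyMap₂ : k × (Fin (m + 1) → Fin 0 → k) →ₗ[k] k × (Fin (m + 1) → k) :=
  LinearMap.inr k k _ ∘ₗ Fin.consInitLinear k ∘ₗ LinearMap.inl k k _ ∘ₗ LinearMap.fst k k _

def syzygyMap₄ : k × (Fin (m + 1) → k) →ₗ[k] k × (Fin (m + 1) → k × k) :=
  (LinearMap.proj (Fin.last m) ∘ₗ LinearMap.snd k k _).prod
    (LinearMap.pi fun i => (LinearMap.proj i ∘ₗ Fin.consInitLinear k).prod
      (-(LinearMap.proj i ∘ₗ LinearMap.snd k k _)))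

def coverMap₄ : k × (Fin (m + 1) → k × k) →ₗ[k] Fin (m + 1) → k :=
  Fin.snocTailLinear k ∘ₗ LinearMap.id.prodMap ((LinearMap.fst k k k).compLeft _)
    + (LinearMap.snd k k k).compLeft _ ∘ₗ LinearMap.snd k k _

@[simp] lemma syzygyMap₂_apply (x : k) (z : Fin (m + 1) → Fin 0 → k) :
    syzygyMap₂ m (x, z) = (0, Fin.consInitLinear k (x, 0)) := rfl

@[simp] lemma syzygyMap₄_apply (y : k) (u : Fin (m + 1) → k) :
    syzygyMap₄ m (y, u) = (u (Fin.last m), fun i => (Fin.consInitLinear k (y, u) i, -u i)) :=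
  rfl

@[simp] lemma coverMap₄_apply (c : k) (w : Fin (m + 1) → k × k) :
    coverMap₄ m (c, w) = Fin.snocTailLinear k (c, fun i => (w i).1) + fun i => (w i).2 := rfl

def syzygyMap : QHom ((P2 k).dsum ((P4 k).dpow (m + 1))) ((P2 k).dsum ((P1 k).dpow (m + 1))) where
  f1 := 0
  f2 := syzygyMap₂ m
  f3 := 0
  f4 := syzygyMap₄ m
  comm_a := Subsingleton.elim _ _
  comm_b := Subsingleton.elim _ _
  comm_c := LinearMap.ext fun (x, _) =>
    show syzygyMap₄ m (x, 0) = (0, fun i => (Fin.consInitLinear k (x, 0) i, 0)) by simp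
  comm_d := Subsingleton.elim _ _

def coverMap : QHom ((P2 k).dsum ((P1 k).dpow (m + 1))) (Nrep k (m + 1)) where
  f1 := LinearMap.snd k _ _
  f2 := Fin.snocTailLinear k
  f3 := LinearMap.snd k _ _
  f4 := coverMap₄ m
  comm_a := LinearMap.ext fun (_, v) =>
    show Fin.snocTailLinear k (0, v) = jordan k (m + 1) 0 v from
      (jordan_zero_eq_snocTailLinear v).symm
  comm_b := rfl
  comm_c := LinearMap.ext fun (y, v) =>
    show Fin.snocTailLinear k (y, v) + 0 = Fin.snocTailLinear k (y, v) from add_zero _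
  comm_d := LinearMap.ext fun (_, v) =>
    show Fin.snocTailLinear k 0 + v = v by rw [map_zero, zero_add]

lemma syzygyMap₂_injective : Function.Injective (syzygyMap₂ (k := k) m) := by
  rintro ⟨x, z⟩ ⟨x', z'⟩ h
  have hx := congr_arg (fun p => p.2 0) h
  simp only [syzygyMap₂_apply, Fin.consInitLinear_apply, Fin.cons_zero] at hx
  exact Prod.ext hx (Subsingleton.elim _ _)

lemma exact_syzygyMap₂_snocTailLinear :
    Function.Exact (syzygyMap₂ (k := k) m) (Fin.snocTailLinear k) := by
  rintro ⟨y, v⟩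
  constructor
  · intro h
    refine ⟨(v 0, 0), Prod.ext ?_ ?_⟩
    · simpa [Fin.snocTailLinear_apply] using (congr_fun h (Fin.last m)).symm
    · rw [syzygyMap₂_apply, ← h, Fin.consInitLinear_snocTailLinear]
  · rintro ⟨⟨x, z⟩, h⟩
    rw [← h]
    exact Fin.snocTailLinear_consInitLinear x 0

lemma syzygyMap₄_injective : Function.Injective (syzygyMap₄ (k := k) m) := by
  rintro ⟨y, u⟩ ⟨y', u'⟩ h
  simp only [syzygyMap₄_apply, Prod.mk.injEq, funext_iff, neg_inj] at h
  have hu : u = u' := funext fun i => (h.2 i).2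
  subst hu
  simpa [Fin.consInitLinear_apply] using (h.2 0).1

lemma coverMap₄_surjective : Function.Surjective (coverMap₄ (k := k) m) := by
  intro z
  refine ⟨(0, fun i => (0, z i)), ?_⟩
  change Fin.snocTailLinear k 0 + z = z
  rw [map_zero, zero_add]

lemma exact_syzygyMap₄_coverMap₄ :
    Function.Exact (syzygyMap₄ (k := k) m) (coverMap₄ m) := by
  rintro ⟨c, w⟩
  constructor
  · intro h
    rw [coverMap₄_apply, add_eq_zero_iff_eq_neg] at h
    refine ⟨((w 0).1, Fin.snocTailLinear k (c, fun i => (w i).1)), ?_⟩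
    rw [syzygyMap₄_apply]
    refine Prod.ext ?_ (funext fun i => Prod.ext ?_ ?_)
    · simp [Fin.snocTailLinear_apply]
    · exact congr_fun (Fin.consInitLinear_snocTailLinear c (fun i => (w i).1)) i
    · simp [h]
  · rintro ⟨⟨y, u⟩, h⟩
    rw [← h]
    show Fin.snocTailLinear k (u (Fin.last m), Fin.consInitLinear k (y, u)) + -u = 0
    rw [Fin.snocTailLinear_consInitLinear, add_neg_cancel]

end Nrep

/-- for every `n ≥ 1` there is a short exact sequence
`0 → P₂ ⊕ P₄ⁿ → P₂ ⊕ P₁ⁿ → N_n → 0` of representations of `Q`. -/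
theorem stmt4 (k : Type) [Field k] (n : ℕ) (hn : 1 ≤ n) :
    ∃ (f : QHom ((P2 k).dsum ((P4 k).dpow n)) ((P2 k).dsum ((P1 k).dpow n)))
      (g : QHom ((P2 k).dsum ((P1 k).dpow n)) (Nrep k n)),
      QShortExact f g := by
  obtain ⟨m, rfl⟩ : ∃ m, n = m + 1 := ⟨n - 1, by omega⟩
  refine ⟨Nrep.syzygyMap m, Nrep.coverMap m,
    ⟨Function.injective_of_subsingleton _, Nrep.syzygyMap₂_injective m,
      Function.injective_of_subsingleton _, Nrep.syzygyMap₄_injective m⟩,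
    ⟨Prod.snd_surjective, Fin.snocTailLinear_surjective, Prod.snd_surjective,
      Nrep.coverMap₄_surjective m⟩,
    ⟨LinearMap.range_zero_eq_ker_snd, ?_, LinearMap.range_zero_eq_ker_snd, ?_⟩⟩
  · exact (LinearMap.exact_iff.mp (Nrep.exact_syzygyMap₂_snocTailLinear m)).symm
  · exact (LinearMap.exact_iff.mp (Nrep.exact_syzygyMap₄_coverMap₄ m)).symm
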